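/- For all integers p and q: y_{p,q} ▷ d = y_{p,q}, y_{p,q} ▷ c = y_{p,q+1}, and y_{p,q+m} = y_{p,q}. -/

import Mathlib

/-- A quandle as in the paper: a set with operations `▷` and `▷⁻¹` satisfying
axioms A1, A2, A3. -/
class PaperQuandle (Q : Type*) where
  rhd : Q → Q → Q
  rhdInv : Q → Q → Q
  fix : ∀ x : Q, rhd x x = x
  inv_rhd : ∀ x y : Q, rhdInv (rhd x y) y = x
  rhd_inv : ∀ x y : Q, rhd (rhdInv x y) y = x
  self_distrib : ∀ x y z : Q, rhd (rhd x y) z = rhd (rhd x z) (rhd y z)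

infixl:65 " ▷ " => PaperQuandle.rhd
infixl:65 " ▷⁻¹ " => PaperQuandle.rhdInv

/-- The point symmetry at `u`, as a permutation of `Q`: `x ↦ x ▷ u`,
with inverse `x ↦ x ▷⁻¹ u`. -/
def ptSym {Q : Type*} [PaperQuandle Q] (u : Q) : Equiv.Perm Q where
  toFun x := x ▷ u
  invFun x := x ▷⁻¹ u
  left_inv x := PaperQuandle.inv_rhd x u
  right_inv x := PaperQuandle.rhd_inv x u

/-- The element `y_{p,q} = d^{(ab)^t c^q}` if `p = 2t`, and
`d^{(ab)^t a c^q}` if `p = 2t+1`.  Here the word `ab` (apply `a`, then `b`)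
is the permutation `ptSym b * ptSym a`. -/
def Y {Q : Type*} [PaperQuandle Q] (a b c d : Q) (p q : ℤ) : Q :=
  if Even p then
    (ptSym c ^ q) (((ptSym b * ptSym a) ^ (p / 2)) d)
  else
    (ptSym c ^ q) ((((ptSym b * ptSym a) ^ ((p - 1) / 2)) d) ▷ a)

/-! `S_d⁻¹` is a product of two involutions in two ways, `S_a S_e` and `S_b S_f`, so conjugation
by `S_a`, `S_e` and `S_b` inverts `S_d`, and the relation for `c` writes `S_c` as a word in these.
Hence `S_a`, `S_b`, `S_c` normalize the cyclic group `⟨S_d⟩`. Each `y_{p,q}` is `σ d` for a word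
`σ` in them, and `S_d σ = σ S_d^j` with `S_d^j d = d` shows that `y_{p,q}` is fixed by `S_d`.
The other two claims only concern the outer power of `S_c`. -/

open Equiv Subgroup

section Group

variable {G : Type*} [Group G] {s t : G}

lemma left_mem_normalizer_zpowers_mul (hs : s * s = 1) (ht : t * t = 1) :
    s ∈ normalizer (zpowers (s * t) : Set G) := by
  have hs' : s⁻¹ = s := inv_eq_of_mul_eq_one_right hs
  have ht' : t⁻¹ = t := inv_eq_of_mul_eq_one_right ht
  have hconj : MulAut.conj s (s * t) = (s * t)⁻¹ := by
    rw [MulAut.conj_apply, mul_inv_rev, hs', ht', ← mul_assoc, hs, one_mul]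
  rw [mem_normalizer_iff_map_conj_eq, MonoidHom.map_zpowers, MonoidHom.coe_coe, hconj,
    zpowers_inv]

lemma right_mem_normalizer_zpowers_mul (hs : s * s = 1) (ht : t * t = 1) :
    t ∈ normalizer (zpowers (s * t) : Set G) := by
  have hs' : s⁻¹ = s := inv_eq_of_mul_eq_one_right hs
  have ht' : t⁻¹ = t := inv_eq_of_mul_eq_one_right ht
  rw [← zpowers_inv, mul_inv_rev, hs', ht']
  exact left_mem_normalizer_zpowers_mul ht hs

end Group

section Quandle

variable {Q : Type*} [PaperQuandle Q]

lemma ptSym_apply (u x : Q) : ptSym u x = x ▷ u := rfl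

lemma apply_rhd_of_mem_normalizer {d : Q} {σ : Perm Q}
    (hσ : σ ∈ normalizer (zpowers (ptSym d) : Set (Perm Q))) : σ d ▷ d = σ d := by
  obtain ⟨j, hj⟩ : σ⁻¹ * ptSym d * σ ∈ zpowers (ptSym d) := by
    simpa using (mem_normalizer_iff.mp (inv_mem hσ) (ptSym d)).mp (mem_zpowers _)
  have hconj : ptSym d * σ = σ * ptSym d ^ j := by
    rw [show ptSym d ^ j = σ⁻¹ * ptSym d * σ from hj]; group
  change (ptSym d * σ) d = σ d
  rw [hconj, Perm.mul_apply, Perm.zpow_apply_eq_self_of_apply_eq_self (PaperQuandle.fix d)]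

lemma Y_eq_zpow_apply (a b c d : Q) (p q : ℤ) :
    Y a b c d p q = (ptSym c ^ q) (Y a b c d p 0) := by
  unfold Y; split_ifs <;> simp

lemma Y_rhd (a b c d : Q) (p q : ℤ) : Y a b c d p q ▷ c = Y a b c d p (q + 1) := by
  rw [Y_eq_zpow_apply _ _ _ _ p q, Y_eq_zpow_apply _ _ _ _ p (q + 1), ← ptSym_apply,
    zpow_add_one, ← Perm.mul_apply, (Commute.self_zpow _ q).eq]

lemma Y_add_right_eq {m : ℕ} {c : Q} (hc : ptSym c ^ m = 1) (a b d : Q) (p q : ℤ) :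
    Y a b c d p (q + m) = Y a b c d p q := by
  rw [Y_eq_zpow_apply _ _ _ _ p (q + m), Y_eq_zpow_apply _ _ _ _ p q, zpow_add, zpow_natCast,
    hc, mul_one]

lemma exists_mem_apply_eq_Y {H : Subgroup (Perm Q)} {a b c : Q} (ha : ptSym a ∈ H)
    (hb : ptSym b ∈ H) (hc : ptSym c ∈ H) (d : Q) (p q : ℤ) :
    ∃ σ ∈ H, σ d = Y a b c d p q := by
  unfold Y
  split_ifs
  · exact ⟨_, mul_mem (zpow_mem hc q) (zpow_mem (mul_mem hb ha) _), rfl⟩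
  · exact ⟨_, mul_mem (zpow_mem hc q) (mul_mem ha (zpow_mem (mul_mem hb ha) _)), rfl⟩

end Quandle

theorem stmt_17
    {Q : Type*} [PaperQuandle Q] (k : ℤ) (m : ℕ) (a b c d e f : Q)
    (rel_a : ∀ x : Q, x ▷ a ▷ a = x)
    (rel_b : ∀ x : Q, x ▷ b ▷ b = x)
    (rel_e : ∀ x : Q, x ▷ e ▷ e = x)
    (rel_f : ∀ x : Q, x ▷ f ▷ f = x)
    (rel_c : ∀ x : Q, (ptSym c ^ m) x = x)
    (rel_dea : ∀ x : Q, x ▷ d ▷ e ▷ a = x)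
    (rel_bdf : ∀ x : Q, x ▷ b ▷ d ▷ f = x)
    (rel_cke : ∀ x : Q, (((ptSym b * ptSym a) ^ k) (x ▷ c)) ▷ a ▷ e = x) :
    ∀ p q : ℤ, Y a b c d p q ▷ d = Y a b c d p q ∧
      Y a b c d p q ▷ c = Y a b c d p (q + 1) ∧
      Y a b c d p (q + (m : ℤ)) = Y a b c d p q := by
  set N := normalizer (zpowers (ptSym d) : Set (Perm Q)) with hN
  have hA : ptSym a * ptSym a = 1 := Equiv.ext rel_a
  have hB : ptSym b * ptSym b = 1 := Equiv.ext rel_b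
  have hE : ptSym e * ptSym e = 1 := Equiv.ext rel_e
  have hF : ptSym f * ptSym f = 1 := Equiv.ext rel_f
  have hd_ae : ptSym d = (ptSym a * ptSym e)⁻¹ :=
    eq_inv_of_mul_eq_one_right (Equiv.ext rel_dea)
  have hd_bf : ptSym d = (ptSym b * ptSym f)⁻¹ := by
    have hfdb : ptSym f * (ptSym d * ptSym b) = 1 := Equiv.ext rel_bdf
    exact eq_inv_of_mul_eq_one_left (by rw [← mul_assoc]; exact mul_eq_one_comm.mp hfdb)
  have ha : ptSym a ∈ N := by
    rw [hN, hd_ae, zpowers_inv]; exact left_mem_normalizer_zpowers_mul hA hE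
  have he : ptSym e ∈ N := by
    rw [hN, hd_ae, zpowers_inv]; exact right_mem_normalizer_zpowers_mul hA hE
  have hb : ptSym b ∈ N := by
    rw [hN, hd_bf, zpowers_inv]; exact left_mem_normalizer_zpowers_mul hB hF
  have hcke : ptSym e * ptSym a * (ptSym b * ptSym a) ^ k * ptSym c = 1 := Equiv.ext rel_cke
  have hc : ptSym c ∈ N := by
    rw [eq_inv_of_mul_eq_one_right hcke]
    exact inv_mem (mul_mem (mul_mem he ha) (zpow_mem (mul_mem hb ha) k))
  intro p q
  obtain ⟨σ, hσ, hσd⟩ := exists_mem_apply_eq_Y ha hb hc d p q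
  exact ⟨hσd ▸ apply_rhd_of_mem_normalizer hσ, Y_rhd a b c d p q,
    Y_add_right_eq (Equiv.ext rel_c) a b d p q⟩
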